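/- If (x; x_1,...,x_n) ∈ C, then there is a finite sequence of transformations, each of which is either the Cremona transform Cr or a permutation of the last n coordinates, whose composition carries (x; x_1,...,x_n) to a reduced vector. -/

import Mathlib

/-- The product `(x; x_i)·(y; y_i) = x*y - ∑ i, x_i * y_i` on `ℝ^{1+(n+3)}`. -/
def dotp {n : ℕ} (x y : ℝ × (Fin (n + 3) → ℝ)) : ℝ :=
  x.1 * y.1 - ∑ i, x.2 i * y.2 i

/-- The vector `-K = (3; 1, 1, …, 1)`. -/
def negK {n : ℕ} : ℝ × (Fin (n + 3) → ℝ) := (3, fun _ => 1)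

/-- The Cremona transform. -/
def Cr {n : ℕ} (d : ℝ × (Fin (n + 3) → ℝ)) : ℝ × (Fin (n + 3) → ℝ) :=
  (2 * d.1 - d.2 0 - d.2 1 - d.2 2,
    fun i =>
      if i = 0 then d.1 - d.2 1 - d.2 2
      else if i = 1 then d.1 - d.2 0 - d.2 2
      else if i = 2 then d.1 - d.2 0 - d.2 1
      else d.2 i)

/-- A vector is positive if all its entries are nonnegative. -/
def PositiveVec {n : ℕ} (d : ℝ × (Fin (n + 3) → ℝ)) : Prop :=
  0 ≤ d.1 ∧ ∀ i, 0 ≤ d.2 i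

/-- A vector is ordered if `d_i ≥ d_{i+1}` whenever both are nonzero, and nonzero
entries precede zero entries. -/
def OrderedVec {n : ℕ} (d : ℝ × (Fin (n + 3) → ℝ)) : Prop :=
  (∀ (i : ℕ) (h1 : i < n + 3) (h2 : i + 1 < n + 3),
      d.2 ⟨i, h1⟩ ≠ 0 → d.2 ⟨i + 1, h2⟩ ≠ 0 → d.2 ⟨i + 1, h2⟩ ≤ d.2 ⟨i, h1⟩) ∧
  (∀ i j : Fin (n + 3), d.2 i ≠ 0 → d.2 j = 0 → i < j)

/-- A vector is reduced if it is positive, ordered, and `d ≥ d_1 + d_2 + d_3`. -/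
def ReducedVec {n : ℕ} (d : ℝ × (Fin (n + 3) → ℝ)) : Prop :=
  PositiveVec d ∧ OrderedVec d ∧ d.2 0 + d.2 1 + d.2 2 ≤ d.1

/-- A vector has integer entries. -/
def IntVec {n : ℕ} (d : ℝ × (Fin (n + 3) → ℝ)) : Prop :=
  (∃ z : ℤ, d.1 = z) ∧ ∀ i, ∃ z : ℤ, d.2 i = z

/-- The set `E` of integer vectors with `(d;d_i)·(d;d_i) ≥ -1` and `-K·(d;d_i) = 1`. -/
def ESet {n : ℕ} : Set (ℝ × (Fin (n + 3) → ℝ)) :=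
  {d | IntVec d ∧ -1 ≤ dotp d d ∧ dotp negK d = 1}

/-- The set `C` of integer vectors with `(x;x_i)·(x;x_i) ≥ 0` that pair nonnegatively
with every element of `E`. -/
def CSet {n : ℕ} : Set (ℝ × (Fin (n + 3) → ℝ)) :=
  {x | IntVec x ∧ 0 ≤ dotp x x ∧ ∀ d ∈ ESet, 0 ≤ dotp x d}

/-!
`Cr` is the reflection `v ↦ v + (v·h) h` in the class `h = (1; 1, 1, 1, 0, …, 0)`, which has
`h·h = -2` and `-K·h = 0`. Like a permutation of the `x_i`, it is therefore an isometry of the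
integral lattice fixing `-K`, so it preserves `E` and, being an involution, also `C`.
Pairing `x ∈ C` with the classes `(0; 0, …, -1, …, 0)` and `(1; 1, 1, 0, …, 0)` of `E` shows that
`x` is positive. After sorting the `x_i` decreasingly, either `x` is reduced or
`x < x_1 + x_2 + x_3`, and then `Cr` lowers the degree to `2x - x_1 - x_2 - x_3 < x`. The degree
is a nonnegative integer, so this descent ends at a reduced vector.
-/

open Relation

namespace Cremona

variable {n : ℕ}

@[simp] lemma fin_zero_ne_two : (0 : Fin (n + 3)) ≠ 2 := by
  rw [Ne, Fin.ext_iff, Fin.val_zero, Fin.val_two]; omega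

@[simp] lemma fin_one_ne_two : (1 : Fin (n + 3)) ≠ 2 := by
  rw [Ne, Fin.ext_iff, Fin.val_one, Fin.val_two]; omega

@[simp] lemma fin_two_ne_zero : (2 : Fin (n + 3)) ≠ 0 := fin_zero_ne_two.symm

@[simp] lemma fin_two_ne_one : (2 : Fin (n + 3)) ≠ 1 := fin_one_ne_two.symm

lemma dotp_comm (v w : ℝ × (Fin (n + 3) → ℝ)) : dotp v w = dotp w v := by
  simp only [dotp, mul_comm]

lemma dotp_add_left (u v w : ℝ × (Fin (n + 3) → ℝ)) :
    dotp (u + v) w = dotp u w + dotp v w := by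
  simp only [dotp, Prod.fst_add, Prod.snd_add, Pi.add_apply, add_mul, Finset.sum_add_distrib]
  ring

lemma dotp_smul_left (a : ℝ) (v w : ℝ × (Fin (n + 3) → ℝ)) :
    dotp (a • v) w = a * dotp v w := by
  simp only [dotp, Prod.smul_fst, Prod.smul_snd, Pi.smul_apply, smul_eq_mul, mul_assoc,
    ← Finset.mul_sum]
  ring

lemma dotp_add_right (u v w : ℝ × (Fin (n + 3) → ℝ)) :
    dotp u (v + w) = dotp u v + dotp u w := by
  rw [dotp_comm, dotp_add_left, dotp_comm v, dotp_comm w]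

lemma dotp_smul_right (a : ℝ) (v w : ℝ × (Fin (n + 3) → ℝ)) :
    dotp v (a • w) = a * dotp v w := by
  rw [dotp_comm, dotp_smul_left, dotp_comm]

def crRoot : ℝ × (Fin (n + 3) → ℝ) := (1, Pi.single 0 1 + Pi.single 1 1 + Pi.single 2 1)

lemma dotp_crRoot (v : ℝ × (Fin (n + 3) → ℝ)) :
    dotp v crRoot = v.1 - v.2 0 - v.2 1 - v.2 2 := by
  simp [dotp, crRoot, mul_add, Finset.sum_add_distrib, Pi.single_apply, sub_sub]

lemma dotp_crRoot_self : dotp (crRoot : ℝ × (Fin (n + 3) → ℝ)) crRoot = -2 := by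
  rw [dotp_crRoot]; norm_num [crRoot]

lemma dotp_negK_crRoot : dotp (negK : ℝ × (Fin (n + 3) → ℝ)) crRoot = 0 := by
  rw [dotp_crRoot]; norm_num [negK]

lemma Cr_eq_reflection (v : ℝ × (Fin (n + 3) → ℝ)) : Cr v = v + dotp v crRoot • crRoot := by
  rw [dotp_crRoot]
  refine Prod.ext ?_ (funext fun i => ?_)
  · simp [Cr, crRoot, two_mul, add_sub_assoc]
  · by_cases h0 : i = 0
    · subst h0
      simp only [Cr, ↓reduceIte, crRoot, Prod.smul_mk, smul_eq_mul, smul_add, Prod.snd_add,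
        Pi.add_apply, Pi.smul_apply, Pi.single_eq_same, ne_eq, zero_ne_one, not_false_eq_true,
        Pi.single_eq_of_ne, fin_zero_ne_two]
      ring
    by_cases h1 : i = 1
    · subst h1
      simp only [Cr, one_ne_zero, ↓reduceIte, crRoot, Prod.smul_mk, smul_eq_mul, smul_add,
        Prod.snd_add, Pi.add_apply, Pi.smul_apply, ne_eq, not_false_eq_true, Pi.single_eq_of_ne,
        Pi.single_eq_same, fin_one_ne_two]
      ring
    by_cases h2 : i = 2
    · subst h2; simp [Cr, crRoot]
    simp [Cr, crRoot, h0, h1, h2]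

lemma dotp_Cr_left (v w : ℝ × (Fin (n + 3) → ℝ)) :
    dotp (Cr v) w = dotp v w + dotp v crRoot * dotp crRoot w := by
  rw [Cr_eq_reflection, dotp_add_left, dotp_smul_left]

lemma dotp_Cr_Cr (v w : ℝ × (Fin (n + 3) → ℝ)) : dotp (Cr v) (Cr w) = dotp v w := by
  simp only [Cr_eq_reflection, dotp_add_left, dotp_add_right, dotp_smul_left, dotp_smul_right,
    dotp_crRoot_self, dotp_comm crRoot]
  ring

lemma Cr_negK : Cr (negK : ℝ × (Fin (n + 3) → ℝ)) = negK := by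
  simp [Cr_eq_reflection, dotp_negK_crRoot]

lemma Cr_Cr (v : ℝ × (Fin (n + 3) → ℝ)) : Cr (Cr v) = v := by
  rw [Cr_eq_reflection (Cr v), dotp_Cr_left, dotp_crRoot_self, Cr_eq_reflection v]
  module

lemma intVec_Cr {v : ℝ × (Fin (n + 3) → ℝ)} (hv : IntVec v) : IntVec (Cr v) := by
  obtain ⟨⟨a, ha⟩, hvi⟩ := hv
  obtain ⟨⟨b₀, hb₀⟩, ⟨b₁, hb₁⟩, ⟨b₂, hb₂⟩⟩ := And.intro (hvi 0) (And.intro (hvi 1) (hvi 2))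
  refine ⟨⟨2 * a - b₀ - b₁ - b₂, by simp [Cr, *]⟩, fun i => ?_⟩
  simp only [Cr]
  split_ifs
  exacts [⟨a - b₁ - b₂, by simp [*]⟩, ⟨a - b₀ - b₂, by simp [*]⟩, ⟨a - b₀ - b₁, by simp [*]⟩,
    hvi i]

structure IsKIsometry (T : ℝ × (Fin (n + 3) → ℝ) → ℝ × (Fin (n + 3) → ℝ)) : Prop where
  intVec : ∀ v, IntVec v → IntVec (T v)
  dotp_map : ∀ v w, dotp (T v) (T w) = dotp v w
  map_negK : T negK = negK

namespace IsKIsometry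

variable {T S : ℝ × (Fin (n + 3) → ℝ) → ℝ × (Fin (n + 3) → ℝ)}

lemma mem_ESet (hT : IsKIsometry T) {d : ℝ × (Fin (n + 3) → ℝ)} (hd : d ∈ ESet) :
    T d ∈ ESet := by
  obtain ⟨hint, hself, hK⟩ := hd
  exact ⟨hT.intVec d hint, by rwa [hT.dotp_map], by rwa [← hT.map_negK, hT.dotp_map]⟩

lemma mem_CSet (hT : IsKIsometry T) (hS : IsKIsometry S) (hTS : ∀ w, T (S w) = w)
    {x : ℝ × (Fin (n + 3) → ℝ)} (hx : x ∈ CSet) : T x ∈ CSet := by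
  obtain ⟨hint, hself, hE⟩ := hx
  refine ⟨hT.intVec x hint, by rwa [hT.dotp_map], fun d hd => ?_⟩
  rw [← hTS d, hT.dotp_map]
  exact hE _ (hS.mem_ESet hd)

end IsKIsometry

lemma isKIsometry_Cr : IsKIsometry (Cr (n := n)) :=
  ⟨fun _ => intVec_Cr, dotp_Cr_Cr, Cr_negK⟩

lemma isKIsometry_perm (σ : Equiv.Perm (Fin (n + 3))) :
    IsKIsometry fun v : ℝ × (Fin (n + 3) → ℝ) => (v.1, v.2 ∘ σ) where
  intVec _ hv := ⟨hv.1, fun i => hv.2 (σ i)⟩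
  dotp_map v w := by
    simp only [dotp, Function.comp_apply]
    rw [Equiv.sum_comp σ fun i => v.2 i * w.2 i]
  map_negK := rfl

lemma Cr_mem_CSet {x : ℝ × (Fin (n + 3) → ℝ)} (hx : x ∈ CSet) : Cr x ∈ CSet :=
  isKIsometry_Cr.mem_CSet isKIsometry_Cr Cr_Cr hx

lemma perm_mem_CSet (σ : Equiv.Perm (Fin (n + 3))) {x : ℝ × (Fin (n + 3) → ℝ)}
    (hx : x ∈ CSet) : (x.1, x.2 ∘ σ) ∈ CSet :=
  (isKIsometry_perm σ).mem_CSet (isKIsometry_perm σ⁻¹)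
    (fun _ => Prod.ext rfl (funext fun _ => by simp)) hx

lemma intVec_of_int (a : ℤ) (b : Fin (n + 3) → ℤ) :
    IntVec (((a : ℝ), fun i => (b i : ℝ)) : ℝ × (Fin (n + 3) → ℝ)) :=
  ⟨⟨a, rfl⟩, fun i => ⟨b i, rfl⟩⟩

lemma exceptional_mem_ESet (i : Fin (n + 3)) :
    ((0 : ℝ), Pi.single i (-1)) ∈ (ESet : Set (ℝ × (Fin (n + 3) → ℝ))) := by
  refine ⟨?_, ?_, ?_⟩
  · convert intVec_of_int 0 (Pi.single i (-1)) using 2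
    · simp
    · ext j; simp [Pi.single_apply]
  · simp [dotp, Pi.single_apply]
  · simp [dotp, negK, Pi.single_apply]

lemma lineThroughTwo_mem_ESet :
    ((1 : ℝ), Pi.single 0 1 + Pi.single 1 1) ∈ (ESet : Set (ℝ × (Fin (n + 3) → ℝ))) := by
  refine ⟨?_, ?_, ?_⟩
  · convert intVec_of_int 1 (Pi.single 0 1 + Pi.single 1 1) using 2
    · simp
    · ext j; simp [Pi.single_apply]
  · simp [dotp, Pi.single_apply, mul_add, Finset.sum_add_distrib]
  · norm_num [dotp, negK, Pi.single_apply, mul_add, Finset.sum_add_distrib]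

lemma CSet_snd_nonneg {x : ℝ × (Fin (n + 3) → ℝ)} (hx : x ∈ CSet) (i : Fin (n + 3)) :
    0 ≤ x.2 i := by
  simpa [dotp, Pi.single_apply] using hx.2.2 _ (exceptional_mem_ESet i)

lemma CSet_fst_nonneg {x : ℝ × (Fin (n + 3) → ℝ)} (hx : x ∈ CSet) : 0 ≤ x.1 := by
  have : x.2 0 + x.2 1 ≤ x.1 := by
    simpa [dotp, Pi.single_apply, mul_add, Finset.sum_add_distrib] using
      hx.2.2 _ lineThroughTwo_mem_ESet
  linarith [CSet_snd_nonneg hx 0, CSet_snd_nonneg hx 1]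

lemma exists_perm_antitone (f : Fin (n + 3) → ℝ) :
    ∃ σ : Equiv.Perm (Fin (n + 3)), Antitone (f ∘ σ) :=
  ⟨Tuple.sort (-f), fun _ _ hij => neg_le_neg_iff.1 (Tuple.monotone_sort (-f) hij)⟩

lemma orderedVec_of_antitone {y : ℝ × (Fin (n + 3) → ℝ)} (ha : Antitone y.2)
    (hpos : ∀ i, 0 ≤ y.2 i) : OrderedVec y := by
  refine ⟨fun i _ _ _ _ => ha (Fin.mk_le_mk.2 i.le_succ), fun i j hi hj => ?_⟩
  by_contra! hji
  exact hi (le_antisymm (hj ▸ ha hji) (hpos i))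

lemma reducedVec_of_antitone {y : ℝ × (Fin (n + 3) → ℝ)} (hy : y ∈ CSet) (ha : Antitone y.2)
    (h : y.2 0 + y.2 1 + y.2 2 ≤ y.1) : ReducedVec y :=
  ⟨⟨CSet_fst_nonneg hy, CSet_snd_nonneg hy⟩,
    orderedVec_of_antitone ha (CSet_snd_nonneg hy), h⟩

lemma Cr_fst_add_one_le {y : ℝ × (Fin (n + 3) → ℝ)} (hy : IntVec y)
    (h : y.1 < y.2 0 + y.2 1 + y.2 2) : (Cr y).1 + 1 ≤ y.1 := by
  obtain ⟨a, ha⟩ := (intVec_Cr hy).1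
  obtain ⟨b, hb⟩ := hy.1
  have hlt : (Cr y).1 < y.1 := by simp only [Cr]; linarith
  rw [ha, hb] at hlt ⊢
  exact_mod_cast Int.add_one_le_of_lt (by exact_mod_cast hlt)

def CremonaStep (v w : ℝ × (Fin (n + 3) → ℝ)) : Prop :=
  w = Cr v ∨ ∃ σ : Equiv.Perm (Fin (n + 3)), w = (v.1, v.2 ∘ σ)

lemma exists_list_of_reflTransGen {x y : ℝ × (Fin (n + 3) → ℝ)}
    (h : ReflTransGen CremonaStep x y) :
    ∃ L : List (ℝ × (Fin (n + 3) → ℝ) → ℝ × (Fin (n + 3) → ℝ)),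
      (∀ f ∈ L, f = Cr ∨ ∃ σ : Equiv.Perm (Fin (n + 3)), f = fun v => (v.1, v.2 ∘ σ)) ∧
      L.foldl (fun v f => f v) x = y := by
  induction h with
  | refl => exact ⟨[], by simp, rfl⟩
  | tail _ hstep ih =>
    obtain ⟨L, hL, rfl⟩ := ih
    rcases hstep with rfl | ⟨σ, rfl⟩
    · exact ⟨L ++ [Cr], List.forall_mem_append.2 ⟨hL, List.forall_mem_singleton.2 (Or.inl rfl)⟩,
        by simp⟩
    · refine ⟨L ++ [fun v => (v.1, v.2 ∘ σ)], List.forall_mem_append.2 ⟨hL, ?_⟩, by simp⟩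
      exact List.forall_mem_singleton.2 (Or.inr ⟨σ, rfl⟩)

lemma exists_reduced_of_fst_lt (k : ℕ) {x : ℝ × (Fin (n + 3) → ℝ)} (hx : x ∈ CSet)
    (hk : x.1 < k) : ∃ y, ReflTransGen CremonaStep x y ∧ ReducedVec y := by
  induction k generalizing x with
  | zero => exact absurd hk (not_lt.2 (by exact_mod_cast CSet_fst_nonneg hx))
  | succ k ih =>
    obtain ⟨σ, hσ⟩ := exists_perm_antitone x.2
    have hyC := perm_mem_CSet σ hx
    have hxy : CremonaStep x (x.1, x.2 ∘ σ) := Or.inr ⟨σ, rfl⟩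
    by_cases hred : x.2 (σ 0) + x.2 (σ 1) + x.2 (σ 2) ≤ x.1
    · exact ⟨_, .single hxy, reducedVec_of_antitone hyC hσ hred⟩
    have hCr := Cr_fst_add_one_le hyC.1 (not_le.1 hred)
    obtain ⟨z, hz, hzred⟩ := ih (Cr_mem_CSet hyC) (by push_cast at hk; linarith)
    exact ⟨z, .head hxy (.head (Or.inl rfl) hz), hzred⟩

end Cremona

theorem C_reducible {n : ℕ} (x : ℝ × (Fin (n + 3) → ℝ)) (hx : x ∈ CSet) :
    ∃ L : List (ℝ × (Fin (n + 3) → ℝ) → ℝ × (Fin (n + 3) → ℝ)),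
      (∀ f ∈ L, f = Cr ∨ ∃ σ : Equiv.Perm (Fin (n + 3)), f = fun v => (v.1, v.2 ∘ σ)) ∧
      ReducedVec (L.foldl (fun v f => f v) x) := by
  obtain ⟨y, hxy, hy⟩ := Cremona.exists_reduced_of_fst_lt (⌊x.1⌋₊ + 1) hx (by
    exact_mod_cast Nat.lt_floor_add_one x.1)
  obtain ⟨L, hL, rfl⟩ := Cremona.exists_list_of_reflTransGen hxy
  exact ⟨L, hL, hy⟩
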